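/- Let χ = 2ρ̌ and let ξ_Π = Σ_{Π_M ⊆ Π} v^{|Π|−|Π_M|} · w₀(M). Then for every proper subset Π_{M₁} ⊊ Π one has (ξ_Π : w₀(M₁)) = 0; equivalently, Σ_{Π_M ⊆ Π} v^{|Π|−|Π_M|} (−v)^{#(Π_M ∨ Π_{M₁})} = 0 in ℚ(v). -/

import Mathlib

open scoped InnerProductSpace

noncomputable section

/-- The reflection `s_α` in the hyperplane orthogonal to `α`. -/
def sRefl {V : Type*} [NormedAddCommGroup V] [InnerProductSpace ℝ V] [FiniteDimensional ℝ V]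
    (α : V) : V ≃ₗᵢ[ℝ] V :=
  Submodule.reflection (ℝ ∙ α)ᗮ

/-- `r_n(w) = {α ∈ Δ : ⟨α, χ⟩ = n and wα ∈ Δ⁺}`. -/
def rW {V : Type*} [NormedAddCommGroup V] [InnerProductSpace ℝ V]
    (Δ pos : Finset V) (χ : V) (n : ℤ) (w : V ≃ₗᵢ[ℝ] V) : Set V :=
  {α : V | α ∈ Δ ∧ ⟪α, χ⟫_ℝ = (n : ℝ) ∧ w α ∈ pos}

/-- `τ(w₁,w₂) = #(r₂(w₁) ∆ r₂(w₂)) − #(r₀(w₁) ∆ r₀(w₂))`. -/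
def tau {V : Type*} [NormedAddCommGroup V] [InnerProductSpace ℝ V]
    (Δ pos : Finset V) (χ : V) (w₁ w₂ : V ≃ₗᵢ[ℝ] V) : ℤ :=
  ((symmDiff (rW Δ pos χ 2 w₁) (rW Δ pos χ 2 w₂)).ncard : ℤ)
    - ((symmDiff (rW Δ pos χ 0 w₁) (rW Δ pos χ 0 w₂)).ncard : ℤ)

/-- The symmetric `ℚ(v)`-bilinear form on the free `ℚ(v)`-module `K` with basis `W`,
determined on basis elements by `(w₁ : w₂) = (−v)^{τ(w₁,w₂)}`. -/
def Bform {V : Type*} [NormedAddCommGroup V] [InnerProductSpace ℝ V]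
    (Δ pos : Finset V) (χ : V) (W : Subgroup (V ≃ₗᵢ[ℝ] V)) :
    (W →₀ RatFunc ℚ) →ₗ[RatFunc ℚ] (W →₀ RatFunc ℚ) →ₗ[RatFunc ℚ] RatFunc ℚ :=
  Finsupp.linearCombination (RatFunc ℚ) fun w : W =>
    Finsupp.linearCombination (RatFunc ℚ) fun w' : W =>
      (-(RatFunc.X : RatFunc ℚ)) ^ (tau Δ pos χ (w : V ≃ₗᵢ[ℝ] V) (w' : V ≃ₗᵢ[ℝ] V))

/-- `ξ_{M'} = Σ_{Π_M ⊆ Π_{M'}} v^{|Π_{M'}|−|Π_M|} · w₀(M)` in `K`. -/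
def xiElt {V : Type*} [NormedAddCommGroup V] [InnerProductSpace ℝ V]
    (W : Subgroup (V ≃ₗᵢ[ℝ] V)) (w0M : Finset V → W) (M' : Finset V) :
    W →₀ RatFunc ℚ :=
  ∑ M ∈ M'.powerset,
    Finsupp.single (w0M M) ((RatFunc.X : RatFunc ℚ) ^ (M'.card - M.card))

/-!
For a simple root `γ` the reflection `s_γ` permutes the positive roots other than `γ` and
negates their pairing with `γ`, so `⟪γ, χ⟫ = 2`; hence `⟪α, χ⟫` is twice the height of `α`.
No root lies at level `0`, and the roots at level `2` are exactly the simple ones. Since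
`w₀(M) x - x ∈ span Π_M`, a simple root `α ∉ Π_M` keeps its coordinate `1` at `α` and stays
positive, while one in `Π_M` becomes negative; thus `r₂(w₀(M)) = Π \ Π_M`, `r₀ = ∅`, and
`τ(w₀(M), w₀(M₁)) = #(Π_M ∆ Π_{M₁})`. The resulting sum vanishes: for `a ∈ Π \ Π_{M₁}` the
terms of `Π_M` and `Π_M ∪ {a}` cancel.
-/

open Finset

section Reflection

variable {V : Type*} [NormedAddCommGroup V] [InnerProductSpace ℝ V] [FiniteDimensional ℝ V]

lemma sRefl_apply (α x : V) : sRefl α x = x - (2 * ⟪α, x⟫_ℝ / ⟪α, α⟫_ℝ) • α := by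
  rw [sRefl, Submodule.reflection_apply, Submodule.starProjection_orthogonal_val,
    Submodule.starProjection_singleton, real_inner_self_eq_norm_sq, mul_div_assoc]
  simp only [RCLike.ofReal_real_eq_id, id_eq]
  module

lemma sRefl_sRefl (α x : V) : sRefl α (sRefl α x) = x :=
  Submodule.reflection_reflection _ x

lemma sRefl_inv (α : V) : (sRefl α)⁻¹ = sRefl α :=
  Submodule.reflection_symm

lemma sRefl_self (α : V) : sRefl α α = -α :=
  Submodule.reflection_orthogonalComplement_singleton_eq_neg α

lemma inner_sRefl_right (α x : V) : ⟪α, sRefl α x⟫_ℝ = -⟪α, x⟫_ℝ := by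
  rw [← (sRefl α).inner_map_map, sRefl_self, sRefl_sRefl, inner_neg_left]

lemma sRefl_sub_mem_span {M : Set V} {α : V} (hα : α ∈ M) (x : V) :
    sRefl α x - x ∈ Submodule.span ℝ M := by
  rw [sRefl_apply, sub_sub_cancel_left]
  exact Submodule.neg_mem _ (Submodule.smul_mem _ _ (Submodule.subset_span hα))

lemma sub_mem_span_of_mem_closure {M : Finset V} {w : V ≃ₗᵢ[ℝ] V}
    (hw : w ∈ Subgroup.closure {e | ∃ α ∈ M, e = sRefl α}) (x : V) :
    w x - x ∈ Submodule.span ℝ (M : Set V) := by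
  induction hw using Subgroup.closure_induction'' generalizing x with
  | mem _ h | inv_mem _ h =>
    obtain ⟨α, hα, rfl⟩ := h
    simpa only [sRefl_inv] using sRefl_sub_mem_span (M := (M : Set V)) hα x
  | one => simp
  | mul u w _ _ hu hw =>
    simpa using Submodule.add_mem _ (hu (w x)) (hw x)

lemma mapsTo_of_mem_closure {M : Finset V} {S : Set V} (hS : ∀ α ∈ M, ∀ β ∈ S, sRefl α β ∈ S)
    {w : V ≃ₗᵢ[ℝ] V} (hw : w ∈ Subgroup.closure {e | ∃ α ∈ M, e = sRefl α}) :
    ∀ β ∈ S, w β ∈ S := by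
  induction hw using Subgroup.closure_induction'' with
  | mem _ h | inv_mem _ h =>
    obtain ⟨α, hα, rfl⟩ := h
    simpa only [sRefl_inv] using hS α hα
  | one => simp
  | mul u w _ _ hu hw => exact fun β hβ => hu _ (hw β hβ)

end Reflection

theorem Finset.sum_powerset_pow_mul_neg_pow_card_symmDiff_eq_zero {α R : Type*} [DecidableEq α]
    [CommRing R] (x : R) {s t : Finset α} (h : ¬ t ⊆ s) :
    ∑ u ∈ t.powerset, x ^ (#t - #u) * (-x) ^ #(symmDiff u s) = 0 := by
  obtain ⟨a, hat, has⟩ := not_subset.mp h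
  rw [← insert_erase hat, sum_powerset_insert (notMem_erase a t), ← sum_add_distrib]
  refine sum_eq_zero fun u hu => ?_
  have hau : a ∉ u := fun ha => notMem_erase a t (mem_powerset.mp hu ha)
  have hsymm : symmDiff (insert a u) s = insert a (symmDiff u s) := by
    ext b
    by_cases hb : b = a
    · simp [mem_symmDiff, hb, has]
    · simp [mem_symmDiff, hb]
  have ha : a ∉ symmDiff u s := by simp [mem_symmDiff, hau, has]
  rw [hsymm, card_insert_of_notMem ha, card_insert_of_notMem hau,
    card_insert_of_notMem (notMem_erase a t), Nat.add_sub_add_right,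
    Nat.sub_add_comm (card_le_card (mem_powerset.mp hu))]
  ring

section BilinearForm

variable {V : Type*} [NormedAddCommGroup V] [InnerProductSpace ℝ V]
  (Δ pos : Finset V) (χ : V) (W : Subgroup (V ≃ₗᵢ[ℝ] V))

lemma Bform_single_single (w₁ w₂ : W) (a b : RatFunc ℚ) :
    Bform Δ pos χ W (Finsupp.single w₁ a) (Finsupp.single w₂ b) =
      a * b * (-RatFunc.X) ^ tau Δ pos χ (w₁ : V ≃ₗᵢ[ℝ] V) w₂ := by
  simp only [Bform, Finsupp.linearCombination_single, LinearMap.smul_apply, smul_eq_mul]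
  ring

lemma Bform_xiElt_single (w0M : Finset V → W) (M' : Finset V) (w : W) :
    Bform Δ pos χ W (xiElt W w0M M') (Finsupp.single w 1) =
      ∑ M ∈ M'.powerset,
        RatFunc.X ^ (#M' - #M) * (-RatFunc.X) ^ tau Δ pos χ (w0M M : V ≃ₗᵢ[ℝ] V) w := by
  simp only [xiElt, map_sum, LinearMap.coe_sum, Finset.sum_apply, Bform_single_single, mul_one]

end BilinearForm

section RootSystem

variable {V : Type*} [NormedAddCommGroup V] [InnerProductSpace ℝ V] [FiniteDimensional ℝ V]

structure IsSimpleSystem (Δ pos Pi : Finset V) : Prop where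
  span_eq_top : Submodule.span ℝ (Δ : Set V) = ⊤
  zero_notMem : (0 : V) ∉ Δ
  reduced : ∀ α ∈ Δ, ∀ t : ℝ, t • α ∈ Δ → t = 1 ∨ t = -1
  sRefl_mem : ∀ α ∈ Δ, ∀ β ∈ Δ, sRefl α β ∈ Δ
  pos_subset : pos ⊆ Δ
  mem_pos_iff : ∀ α ∈ Δ, (α ∈ pos ↔ -α ∉ pos)
  simple_subset : Pi ⊆ pos
  linearIndependent : LinearIndependent ℝ (fun β : (Pi : Set V) => (β : V))
  exists_nat_coeff : ∀ α ∈ pos, ∃ c : V → ℕ, α = ∑ β ∈ Pi, (c β : ℝ) • β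

def twoRhoCheck (pos : Finset V) : V :=
  ∑ β ∈ pos, ((2 : ℝ) / ⟪β, β⟫_ℝ) • β

def IsLongestElement (Δ pos M : Finset V) (w : V ≃ₗᵢ[ℝ] V) : Prop :=
  w ∈ Subgroup.closure {e | ∃ α ∈ M, e = sRefl α} ∧
    ∀ α ∈ Δ, α ∈ Submodule.span ℝ (M : Set V) → α ∈ pos → -(w α) ∈ pos

namespace IsSimpleSystem

variable {Δ pos Pi : Finset V}

lemma mem_root_of_mem_simple (h : IsSimpleSystem Δ pos Pi) {α : V} (hα : α ∈ Pi) : α ∈ Δ :=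
  h.pos_subset (h.simple_subset hα)

lemma neg_mem_pos (h : IsSimpleSystem Δ pos Pi) {α : V} (hα : α ∈ Δ) (hαp : α ∉ pos) :
    -α ∈ pos := by
  by_contra hn
  exact hαp ((h.mem_pos_iff α hα).mpr hn)

lemma mem_span_simple_of_mem_pos (h : IsSimpleSystem Δ pos Pi) {α : V} (hα : α ∈ pos) :
    α ∈ Submodule.span ℝ (Pi : Set V) := by
  obtain ⟨c, rfl⟩ := h.exists_nat_coeff α hα
  exact Submodule.sum_mem _ fun β hβ => Submodule.smul_mem _ _ (Submodule.subset_span hβ)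

lemma span_simple_eq_top (h : IsSimpleSystem Δ pos Pi) :
    Submodule.span ℝ (Pi : Set V) = ⊤ := by
  rw [eq_top_iff, ← h.span_eq_top, Submodule.span_le]
  intro α hα
  by_cases hp : α ∈ pos
  · exact h.mem_span_simple_of_mem_pos hp
  · simpa using Submodule.neg_mem _ (h.mem_span_simple_of_mem_pos (h.neg_mem_pos hα hp))

def basis (h : IsSimpleSystem Δ pos Pi) : Module.Basis (Pi : Set V) ℝ V :=
  Module.Basis.mk h.linearIndependent (by rw [Subtype.range_coe, h.span_simple_eq_top])

lemma repr_simple (h : IsSimpleSystem Δ pos Pi) {β : V} (hβ : β ∈ Pi) :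
    h.basis.repr β = Finsupp.single ⟨β, hβ⟩ 1 := by
  rw [← h.basis.repr_self, basis, Module.Basis.mk_apply]

lemma repr_sum (h : IsSimpleSystem Δ pos Pi) (c : V → ℝ) (i : (Pi : Set V)) :
    h.basis.repr (∑ β ∈ Pi, c β • β) i = c i := by
  have : ∑ β ∈ Pi, c β • β = ∑ j : (Pi : Set V), c j • h.basis j := by
    simp only [basis, Module.Basis.mk_apply]
    exact (sum_coe_sort Pi fun β => c β • β).symm
  rw [this, h.basis.repr_sum_self]

lemma repr_nonneg (h : IsSimpleSystem Δ pos Pi) {α : V} (hα : α ∈ pos) (i : (Pi : Set V)) :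
    0 ≤ h.basis.repr α i := by
  obtain ⟨c, rfl⟩ := h.exists_nat_coeff α hα
  rw [h.repr_sum]
  exact Nat.cast_nonneg _

lemma mem_pos_of_repr_pos (h : IsSimpleSystem Δ pos Pi) {α : V} (hα : α ∈ Δ)
    {i : (Pi : Set V)} (hi : 0 < h.basis.repr α i) : α ∈ pos := by
  by_contra hp
  have := h.repr_nonneg (h.neg_mem_pos hα hp) i
  rw [map_neg, Finsupp.neg_apply] at this
  linarith

lemma repr_apply_eq_of_sub_mem_span (h : IsSimpleSystem Δ pos Pi) {M : Set V}
    (hM : M ⊆ Pi) {x y : V} (hxy : x - y ∈ Submodule.span ℝ M) {i : (Pi : Set V)}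
    (hi : (i : V) ∉ M) : h.basis.repr x i = h.basis.repr y i := by
  have hker : Submodule.span ℝ M ≤ LinearMap.ker (h.basis.coord i) := by
    refine Submodule.span_le.mpr fun β hβ => ?_
    rw [SetLike.mem_coe, LinearMap.mem_ker, Module.Basis.coord_apply,
      h.repr_simple (hM hβ), Finsupp.single_eq_of_ne]
    rintro rfl
    exact hi hβ
  simpa [sub_eq_zero] using hker hxy

lemma exists_repr_pos_of_ne (h : IsSimpleSystem Δ pos Pi) {γ β : V} (hγ : γ ∈ Pi)
    (hβ : β ∈ pos) (hne : β ≠ γ) : ∃ i : (Pi : Set V), (i : V) ≠ γ ∧ 0 < h.basis.repr β i := by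
  obtain ⟨c, hc⟩ := h.exists_nat_coeff β hβ
  by_contra! hle
  have hc0 : ∀ b ∈ Pi, b ≠ γ → c b = 0 := fun b hb hbγ => by
    have := hle ⟨b, hb⟩ hbγ
    rw [hc, h.repr_sum] at this
    exact_mod_cast this.antisymm (Nat.cast_nonneg _)
  have hβγ : β = (c γ : ℝ) • γ := by
    rw [hc, sum_eq_single_of_mem γ hγ fun b hb hbγ => by simp [hc0 b hb hbγ]]
  rcases h.reduced γ (h.mem_root_of_mem_simple hγ) _ (hβγ ▸ h.pos_subset hβ) with h1 | h1
  · exact hne (by rw [hβγ, h1, one_smul])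
  · linarith [(Nat.cast_nonneg (c γ) : (0 : ℝ) ≤ c γ)]

lemma sRefl_mem_pos_erase [DecidableEq V] (h : IsSimpleSystem Δ pos Pi) {γ β : V} (hγ : γ ∈ Pi)
    (hβ : β ∈ pos.erase γ) : sRefl γ β ∈ pos.erase γ := by
  obtain ⟨hne, hβ⟩ := mem_erase.mp hβ
  have hγΔ := h.mem_root_of_mem_simple hγ
  obtain ⟨i, hiγ, hi⟩ := h.exists_repr_pos_of_ne hγ hβ hne
  have hrepr : h.basis.repr (sRefl γ β) i = h.basis.repr β i :=
    h.repr_apply_eq_of_sub_mem_span (Set.singleton_subset_iff.mpr hγ)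
      (sRefl_sub_mem_span (Set.mem_singleton γ) β) hiγ
  refine mem_erase.mpr ⟨fun heq => ?_, h.mem_pos_of_repr_pos
    (h.sRefl_mem γ hγΔ β (h.pos_subset hβ)) (by rwa [hrepr])⟩
  have : β = -γ := by rw [← sRefl_sRefl γ β, heq, sRefl_self]
  rw [this] at hβ
  exact (h.mem_pos_iff γ hγΔ).mp (h.simple_subset hγ) hβ

lemma inner_twoRhoCheck_of_mem_simple (h : IsSimpleSystem Δ pos Pi) {γ : V} (hγ : γ ∈ Pi) :
    ⟪γ, twoRhoCheck pos⟫_ℝ = 2 := by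
  classical
  have hγ0 : ⟪γ, γ⟫_ℝ ≠ 0 :=
    inner_self_ne_zero.mpr fun h0 => h.zero_notMem (h0 ▸ h.mem_root_of_mem_simple hγ)
  set f : V → ℝ := fun β => 2 / ⟪β, β⟫_ℝ * ⟪γ, β⟫_ℝ with hf
  have hperm : ∑ β ∈ pos.erase γ, f (sRefl γ β) = ∑ β ∈ pos.erase γ, f β :=
    sum_nbij' (sRefl γ) (sRefl γ) (fun β hβ => h.sRefl_mem_pos_erase hγ hβ)
      (fun β hβ => h.sRefl_mem_pos_erase hγ hβ) (fun β _ => sRefl_sRefl γ β)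
      (fun β _ => sRefl_sRefl γ β) fun _ _ => rfl
  have hneg : ∀ β, f (sRefl γ β) = -f β := fun β => by
    simp only [hf, LinearIsometryEquiv.inner_map_map, inner_sRefl_right, mul_neg]
  simp only [hneg, sum_neg_distrib] at hperm
  rw [twoRhoCheck, inner_sum, ← add_sum_erase _ _ (h.simple_subset hγ)]
  simp only [real_inner_smul_right]
  rw [← hf, show ∑ β ∈ pos.erase γ, f β = 0 by linarith, add_zero, div_mul_cancel₀ 2 hγ0]

lemma inner_twoRhoCheck_sum (h : IsSimpleSystem Δ pos Pi) (c : V → ℝ) :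
    ⟪∑ β ∈ Pi, c β • β, twoRhoCheck pos⟫_ℝ = 2 * ∑ β ∈ Pi, c β := by
  rw [sum_inner, mul_sum]
  refine sum_congr rfl fun β hβ => ?_
  rw [real_inner_smul_left, h.inner_twoRhoCheck_of_mem_simple hβ, mul_comm]

lemma two_le_inner_twoRhoCheck (h : IsSimpleSystem Δ pos Pi) {α : V} (hα : α ∈ pos) :
    2 ≤ ⟪α, twoRhoCheck pos⟫_ℝ := by
  obtain ⟨c, rfl⟩ := h.exists_nat_coeff α hα
  have hht : ∑ β ∈ Pi, c β ≠ 0 := fun h0 => by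
    rw [sum_eq_zero fun β hβ => by simp [sum_eq_zero_iff.mp h0 β hβ]] at hα
    exact h.zero_notMem (h.pos_subset hα)
  rw [h.inner_twoRhoCheck_sum, ← Nat.cast_sum]
  have : (1 : ℝ) ≤ (∑ β ∈ Pi, c β : ℕ) := by exact_mod_cast Nat.one_le_iff_ne_zero.mpr hht
  linarith

lemma mem_simple_of_inner_twoRhoCheck_eq_two (h : IsSimpleSystem Δ pos Pi) {α : V}
    (hα : α ∈ pos) (h2 : ⟪α, twoRhoCheck pos⟫_ℝ = 2) : α ∈ Pi := by
  obtain ⟨c, rfl⟩ := h.exists_nat_coeff α hα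
  rw [h.inner_twoRhoCheck_sum, ← Nat.cast_sum] at h2
  have hht : ∑ β ∈ Pi, c β = 1 := by exact_mod_cast (by linarith : ((∑ β ∈ Pi, c β : ℕ) : ℝ) = 1)
  obtain ⟨β₀, hβ₀, hc₀⟩ := exists_ne_zero_of_sum_ne_zero (hht ▸ one_ne_zero)
  have hrest : ∀ β ∈ Pi, β ≠ β₀ → c β = 0 := by
    classical
    have hsplit := add_sum_erase Pi c hβ₀
    rw [hht] at hsplit
    have : ∑ β ∈ Pi.erase β₀, c β = 0 := by omega
    exact fun β hβ hne => sum_eq_zero_iff.mp this β (mem_erase.mpr ⟨hne, hβ⟩)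
  have hc₀' : c β₀ = 1 := by
    rw [← hht, sum_eq_single_of_mem β₀ hβ₀ hrest]
  rw [sum_eq_single_of_mem β₀ hβ₀ fun β hβ hne => by simp [hrest β hβ hne], hc₀',
    Nat.cast_one, one_smul]
  exact hβ₀

lemma inner_twoRhoCheck_ne_zero (h : IsSimpleSystem Δ pos Pi) {α : V} (hα : α ∈ Δ) :
    ⟪α, twoRhoCheck pos⟫_ℝ ≠ 0 := by
  by_cases hp : α ∈ pos
  · linarith [h.two_le_inner_twoRhoCheck hp]
  · have := h.two_le_inner_twoRhoCheck (h.neg_mem_pos hα hp)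
    rw [inner_neg_left] at this
    linarith

lemma inner_twoRhoCheck_eq_two_iff (h : IsSimpleSystem Δ pos Pi) {α : V} (hα : α ∈ Δ) :
    ⟪α, twoRhoCheck pos⟫_ℝ = 2 ↔ α ∈ Pi := by
  refine ⟨fun h2 => ?_, h.inner_twoRhoCheck_of_mem_simple⟩
  by_cases hp : α ∈ pos
  · exact h.mem_simple_of_inner_twoRhoCheck_eq_two hp h2
  · have := h.two_le_inner_twoRhoCheck (h.neg_mem_pos hα hp)
    rw [inner_neg_left] at this
    linarith

lemma rW_twoRhoCheck_zero (h : IsSimpleSystem Δ pos Pi) (w : V ≃ₗᵢ[ℝ] V) :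
    rW Δ pos (twoRhoCheck pos) 0 w = ∅ :=
  Set.eq_empty_of_forall_notMem fun _ ⟨hα, h0, _⟩ =>
    h.inner_twoRhoCheck_ne_zero hα (by exact_mod_cast h0)

lemma rW_twoRhoCheck_two (h : IsSimpleSystem Δ pos Pi) (w : V ≃ₗᵢ[ℝ] V) :
    rW Δ pos (twoRhoCheck pos) 2 w = {α | α ∈ Pi ∧ w α ∈ pos} := by
  ext α
  simp only [rW, Set.mem_ofPred_eq, Int.cast_ofNat]
  constructor
  · rintro ⟨hα, h2, hw⟩
    exact ⟨(h.inner_twoRhoCheck_eq_two_iff hα).mp h2, hw⟩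
  · rintro ⟨hα, hw⟩
    exact ⟨h.mem_root_of_mem_simple hα, h.inner_twoRhoCheck_of_mem_simple hα, hw⟩

lemma apply_mem_pos_iff (h : IsSimpleSystem Δ pos Pi) {M : Finset V} (hM : M ⊆ Pi)
    {w : V ≃ₗᵢ[ℝ] V} (hw : IsLongestElement Δ pos M w) {α : V} (hα : α ∈ Pi) :
    w α ∈ pos ↔ α ∉ M := by
  have hαΔ := h.mem_root_of_mem_simple hα
  have hwα : w α ∈ Δ :=
    mapsTo_of_mem_closure (fun β hβ => h.sRefl_mem β (h.mem_root_of_mem_simple (hM hβ)))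
      hw.1 α hαΔ
  refine ⟨fun hp hαM => (h.mem_pos_iff _ hwα).mp hp
    (hw.2 α hαΔ (Submodule.subset_span hαM) (h.simple_subset hα)), fun hαM => ?_⟩
  refine h.mem_pos_of_repr_pos hwα (i := ⟨α, hα⟩) ?_
  rw [h.repr_apply_eq_of_sub_mem_span (coe_subset.mpr hM)
    (sub_mem_span_of_mem_closure hw.1 α) hαM, h.repr_simple hα, Finsupp.single_eq_same]
  exact one_pos

lemma rW_twoRhoCheck_two_eq_sdiff (h : IsSimpleSystem Δ pos Pi) {M : Finset V} (hM : M ⊆ Pi)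
    {w : V ≃ₗᵢ[ℝ] V} (hw : IsLongestElement Δ pos M w) :
    rW Δ pos (twoRhoCheck pos) 2 w = (Pi : Set V) \ M := by
  rw [h.rW_twoRhoCheck_two]
  ext α
  exact and_congr_right (h.apply_mem_pos_iff hM hw)

lemma tau_eq_ncard_symmDiff (h : IsSimpleSystem Δ pos Pi) {M₁ M₂ : Finset V} (hM₁ : M₁ ⊆ Pi)
    (hM₂ : M₂ ⊆ Pi) {w₁ w₂ : V ≃ₗᵢ[ℝ] V} (hw₁ : IsLongestElement Δ pos M₁ w₁)
    (hw₂ : IsLongestElement Δ pos M₂ w₂) :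
    tau Δ pos (twoRhoCheck pos) w₁ w₂ = (symmDiff (M₁ : Set V) M₂).ncard := by
  have hsymm : symmDiff ((Pi : Set V) \ M₁) ((Pi : Set V) \ M₂) = symmDiff (M₁ : Set V) M₂ := by
    ext α
    have h₁ := @hM₁ α
    have h₂ := @hM₂ α
    simp only [Set.mem_symmDiff, Set.mem_sdiff, mem_coe]
    tauto
  rw [tau, h.rW_twoRhoCheck_two_eq_sdiff hM₁ hw₁, h.rW_twoRhoCheck_two_eq_sdiff hM₂ hw₂,
    h.rW_twoRhoCheck_zero, h.rW_twoRhoCheck_zero, hsymm, symmDiff_self, Set.bot_eq_empty,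
    Set.ncard_empty, Nat.cast_zero, sub_zero]

end IsSimpleSystem

end RootSystem

theorem stmt11_general
    {V : Type*} [NormedAddCommGroup V] [InnerProductSpace ℝ V] [FiniteDimensional ℝ V]
    (Δ pos Pi : Finset V) (χ : V)
    -- root system axioms: finite (a `Finset`), spanning, reduced, crystallographic,
    -- stable under negation and under the reflections `s_α`
    (hspan : Submodule.span ℝ (Δ : Set V) = ⊤)
    (hzero : (0 : V) ∉ Δ)
    (hred : ∀ α ∈ Δ, ∀ t : ℝ, t • α ∈ Δ → t = 1 ∨ t = -1)
    (hrefl : ∀ α ∈ Δ, ∀ β ∈ Δ, sRefl α β ∈ Δ)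
    -- positive roots and simple roots
    (hposΔ : pos ⊆ Δ)
    (hpart : ∀ α ∈ Δ, (α ∈ pos ↔ -α ∉ pos))
    (hPipos : Pi ⊆ pos)
    (hindep : LinearIndependent ℝ (fun β : (Pi : Set V) => (β : V)))
    (hcomb : ∀ α ∈ pos, ∃ c : V → ℕ, α = ∑ β ∈ Pi, (c β : ℝ) • β)
    -- the Weyl group, generated by the reflections in the roots
    (W : Subgroup (V ≃ₗᵢ[ℝ] V))
    -- `χ = 2ρ̌` is the sum of the positive coroots `β̌ = 2β/(β,β)`
    (hchi : χ = ∑ β ∈ pos, ((2 : ℝ) / ⟪β, β⟫_ℝ) • β)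
    -- for each `Π_M ⊆ Π`, `w₀(M) ∈ W` is the element of the subgroup `W_M` generated
    -- by the reflections in `Π_M` mapping every positive root in `Δ ∩ span Π_M` to a
    -- negative root
    (w0M : Finset V → W)
    (hw0MW : ∀ M, M ⊆ Pi →
      (w0M M : V ≃ₗᵢ[ℝ] V) ∈ Subgroup.closure {e : V ≃ₗᵢ[ℝ] V | ∃ α ∈ M, e = sRefl α})
    (hw0Mneg : ∀ M, M ⊆ Pi → ∀ α ∈ Δ,
      α ∈ Submodule.span ℝ (M : Set V) → α ∈ pos → -((w0M M : V ≃ₗᵢ[ℝ] V) α) ∈ pos)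
    (M₁ : Finset V) (hM₁ : M₁ ⊂ Pi) :
    Bform Δ pos χ W (xiElt W w0M Pi) (Finsupp.single (w0M M₁) 1) = 0 ∧
    ∑ M ∈ Pi.powerset,
        (RatFunc.X : RatFunc ℚ) ^ (Pi.card - M.card)
          * (-(RatFunc.X : RatFunc ℚ)) ^ (symmDiff (M : Set V) (M₁ : Set V)).ncard
      = 0 := by
  have hsys : IsSimpleSystem Δ pos Pi :=
    ⟨hspan, hzero, hred, hrefl, hposΔ, hpart, hPipos, hindep, hcomb⟩
  have hw0 : ∀ M ⊆ Pi, IsLongestElement Δ pos M (w0M M) :=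
    fun M hM => ⟨hw0MW M hM, hw0Mneg M hM⟩
  have hsum : ∑ M ∈ Pi.powerset, (RatFunc.X : RatFunc ℚ) ^ (Pi.card - M.card)
      * (-(RatFunc.X : RatFunc ℚ)) ^ (symmDiff (M : Set V) (M₁ : Set V)).ncard = 0 := by
    classical
    simpa only [← coe_symmDiff, Set.ncard_coe_finset] using
      sum_powerset_pow_mul_neg_pow_card_symmDiff_eq_zero RatFunc.X
        (not_subset_of_ssubset hM₁)
  have hχ : χ = twoRhoCheck pos := hchi
  refine ⟨?_, hsum⟩
  rw [Bform_xiElt_single, ← hsum, hχ]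
  refine sum_congr rfl fun M hM => ?_
  have hMPi := mem_powerset.mp hM
  rw [hsys.tau_eq_ncard_symmDiff hMPi hM₁.subset (hw0 M hMPi) (hw0 M₁ hM₁.subset), zpow_natCast]

theorem stmt11
    {V : Type*} [NormedAddCommGroup V] [InnerProductSpace ℝ V] [FiniteDimensional ℝ V]
    (Δ pos Pi : Finset V) (χ : V)
    -- root system axioms: finite (a `Finset`), spanning, reduced, crystallographic,
    -- stable under negation and under the reflections `s_α`
    (hspan : Submodule.span ℝ (Δ : Set V) = ⊤)
    (hzero : (0 : V) ∉ Δ)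
    (hsym : ∀ α ∈ Δ, -α ∈ Δ)
    (hred : ∀ α ∈ Δ, ∀ t : ℝ, t • α ∈ Δ → t = 1 ∨ t = -1)
    (hcrys : ∀ α ∈ Δ, ∀ β ∈ Δ, ∃ n : ℤ, 2 * ⟪β, α⟫_ℝ / ⟪α, α⟫_ℝ = (n : ℝ))
    (hrefl : ∀ α ∈ Δ, ∀ β ∈ Δ, sRefl α β ∈ Δ)
    -- positive roots and simple roots
    (hposΔ : pos ⊆ Δ)
    (hpart : ∀ α ∈ Δ, (α ∈ pos ↔ -α ∉ pos))
    (hPipos : Pi ⊆ pos)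
    (hindep : LinearIndependent ℝ (fun β : (Pi : Set V) => (β : V)))
    (hcomb : ∀ α ∈ pos, ∃ c : V → ℕ, α = ∑ β ∈ Pi, (c β : ℝ) • β)
    -- the Weyl group, generated by the reflections in the roots
    (W : Subgroup (V ≃ₗᵢ[ℝ] V))
    (hW : W = Subgroup.closure {e : V ≃ₗᵢ[ℝ] V | ∃ α ∈ Δ, e = sRefl α})
    -- `χ = 2ρ̌` is the sum of the positive coroots `β̌ = 2β/(β,β)`
    (hchi : χ = ∑ β ∈ pos, ((2 : ℝ) / ⟪β, β⟫_ℝ) • β)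
    -- for each `Π_M ⊆ Π`, `w₀(M) ∈ W` is the element of the subgroup `W_M` generated
    -- by the reflections in `Π_M` mapping every positive root in `Δ ∩ span Π_M` to a
    -- negative root
    (w0M : Finset V → W)
    (hw0MW : ∀ M, M ⊆ Pi →
      (w0M M : V ≃ₗᵢ[ℝ] V) ∈ Subgroup.closure {e : V ≃ₗᵢ[ℝ] V | ∃ α ∈ M, e = sRefl α})
    (hw0Mneg : ∀ M, M ⊆ Pi → ∀ α ∈ Δ,
      α ∈ Submodule.span ℝ (M : Set V) → α ∈ pos → -((w0M M : V ≃ₗᵢ[ℝ] V) α) ∈ pos)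
    (M₁ : Finset V) (hM₁ : M₁ ⊂ Pi) :
    Bform Δ pos χ W (xiElt W w0M Pi) (Finsupp.single (w0M M₁) 1) = 0 ∧
    ∑ M ∈ Pi.powerset,
        (RatFunc.X : RatFunc ℚ) ^ (Pi.card - M.card)
          * (-(RatFunc.X : RatFunc ℚ)) ^ (symmDiff (M : Set V) (M₁ : Set V)).ncard
      = 0 :=
  stmt11_general Δ pos Pi χ hspan hzero hred hrefl hposΔ hpart hPipos hindep hcomb W hchi w0M hw0MW
    hw0Mneg M₁ hM₁
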